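/- Suppose Π ∈ M^{m×k}, Π ≠ 0, rank(Π) ≤ r, and let σ⁺_min(Π) be the smallest positive singular value of Π. For ε > 0 define Ψ(Π)₁^ε = {U ∈ S^{k×(k−r)} : min_{U′ ∈ Ψ(Π)} ‖U′ − U‖ ≥ ε}, where Ψ(Π) = argmin_{U ∈ S^{k×(k−r)}} ‖ΠU‖². Then for all sufficiently small ε > 0, min_{U ∈ Ψ(Π)₁^ε} ‖ΠU‖ ≥ (√2/2)·σ⁺_min(Π)·ε. -/

import Mathlib

/-!
Let `P` be the orthogonal projection onto `ker A` and `d² = ‖(1 - P) U‖²`. Since `AᵀA` dominates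
`σ⁺_min(A)² (1 - P)` in the Loewner order, `σ⁺_min(A)² d² ≤ ‖A U‖²`. If `d² < 1`, then
`Uᵀ P U = 1 - G`, with `G` the Gram matrix of `(1 - P) U`, is invertible and
`V = P U (Uᵀ P U)^{-1/2}` has orthonormal columns in `ker A`, so `V ∈ Ψ(A)`; in terms of the
eigenvalues `e_i ∈ [0, 1)` of `G`, `‖V - U‖² = 2 ∑ (1 - √(1 - e_i)) ≤ 2 ∑ e_i = 2 d²`. Hence
`ε² ≤ 2 d²` whenever `ε ≤ √2` (trivially if `d² ≥ 1`), and the bound follows with `ε₀ = √2`.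
-/

open Matrix Filter Topology

noncomputable def frobNormSq {m k : ℕ} (A : Matrix (Fin m) (Fin k) ℝ) : ℝ :=
  Matrix.trace (Aᵀ * A)

noncomputable def frobNorm {m k : ℕ} (A : Matrix (Fin m) (Fin k) ℝ) : ℝ :=
  Real.sqrt (frobNormSq A)

theorem transpose_mul_self_isHermitian {m k : ℕ} (A : Matrix (Fin m) (Fin k) ℝ) :
    (Aᵀ * A).IsHermitian := by
  have h := Matrix.isHermitian_conjTranspose_mul_self A
  rwa [Matrix.conjTranspose_eq_transpose_of_trivial] at h

/-- `sv A j` is the `j+1`-th largest singular value of `A`. -/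
noncomputable def sv {m k : ℕ} (A : Matrix (Fin m) (Fin k) ℝ) : Fin k → ℝ :=
  fun j =>
    Real.sqrt ((transpose_mul_self_isHermitian A).eigenvalues
      (Tuple.sort ((transpose_mul_self_isHermitian A).eigenvalues) j.rev))

/-- `phi r A` is the sum of the squared singular values `σ_{r+1}², …, σ_k²`. -/
noncomputable def phi {m k : ℕ} (r : ℕ) (A : Matrix (Fin m) (Fin k) ℝ) : ℝ :=
  ∑ j ∈ Finset.univ.filter (fun j : Fin k => r ≤ (j : ℕ)), sv A j ^ 2

/-- The argmin set `Ψ(A)` of `U ↦ ‖A U‖²` over matrices with orthonormal columns. -/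
noncomputable def argminSet {m k : ℕ} (d : ℕ) (A : Matrix (Fin m) (Fin k) ℝ) :
    Set (Matrix (Fin k) (Fin d) ℝ) :=
  {U | Uᵀ * U = 1 ∧ ∀ V : Matrix (Fin k) (Fin d) ℝ, Vᵀ * V = 1 →
    frobNormSq (A * U) ≤ frobNormSq (A * V)}

noncomputable def phiDeriv {m k : ℕ} (r : ℕ) (A M : Matrix (Fin m) (Fin k) ℝ) : ℝ :=
  sInf {x : ℝ | ∃ U ∈ argminSet (k - r) A, x = 2 * Matrix.trace ((A * U)ᵀ * (M * U))}


/-- The smallest positive singular value. -/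
noncomputable def svMinPos {m k : ℕ} (A : Matrix (Fin m) (Fin k) ℝ) : ℝ :=
  sInf {x : ℝ | 0 < x ∧ ∃ j, sv A j = x}

section conjDiag

variable {N : Type*} [Fintype N] [DecidableEq N]

def conjDiag (Z : Matrix N N ℝ) (a : N → ℝ) : Matrix N N ℝ :=
  Z * diagonal a * Zᵀ

theorem conjDiag_mul_conjDiag {Z : Matrix N N ℝ} (hZ : Zᵀ * Z = 1) (a b : N → ℝ) :
    conjDiag Z a * conjDiag Z b = conjDiag Z (a * b) := by
  have : diagonal a * (Zᵀ * (Z * (diagonal b * Zᵀ))) = diagonal (a * b) * Zᵀ := by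
    rw [← Matrix.mul_assoc Zᵀ Z, hZ, Matrix.one_mul, ← Matrix.mul_assoc, diagonal_mul_diagonal]
    rfl
  simp only [conjDiag, Matrix.mul_assoc, this]

theorem trace_conjDiag {Z : Matrix N N ℝ} (hZ : Zᵀ * Z = 1) (a : N → ℝ) :
    trace (conjDiag Z a) = ∑ i, a i := by
  rw [conjDiag, trace_mul_comm, ← Matrix.mul_assoc, hZ, Matrix.one_mul, trace_diagonal]

theorem transpose_conjDiag (Z : Matrix N N ℝ) (a : N → ℝ) : (conjDiag Z a)ᵀ = conjDiag Z a := by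
  rw [conjDiag, transpose_mul, transpose_mul, transpose_transpose, diagonal_transpose,
    Matrix.mul_assoc]

theorem conjDiag_sub (Z : Matrix N N ℝ) (a b : N → ℝ) :
    conjDiag Z (a - b) = conjDiag Z a - conjDiag Z b := by
  rw [conjDiag, conjDiag, conjDiag, ← Matrix.sub_mul, ← Matrix.mul_sub]
  exact congrArg (Z * · * Zᵀ) (diagonal_sub a b).symm

theorem conjDiag_smul (Z : Matrix N N ℝ) (c : ℝ) (a : N → ℝ) :
    conjDiag Z (c • a) = c • conjDiag Z a := by
  rw [conjDiag, conjDiag, diagonal_smul, mul_smul_comm, smul_mul_assoc]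

@[simp]
theorem conjDiag_zero (Z : Matrix N N ℝ) : conjDiag Z 0 = 0 := by
  simp [conjDiag]

theorem conjDiag_one {Z : Matrix N N ℝ} (hZ : Z * Zᵀ = 1) : conjDiag Z 1 = 1 := by
  rw [conjDiag, show diagonal (1 : N → ℝ) = 1 from diagonal_one, Matrix.mul_one, hZ]

theorem trace_mul_conjDiag_mul_mono {M : Type*} [Fintype M] (Z : Matrix N N ℝ) {a b : N → ℝ}
    (hab : a ≤ b) (U : Matrix N M ℝ) :
    trace (Uᵀ * conjDiag Z a * U) ≤ trace (Uᵀ * conjDiag Z b * U) := by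
  have hconj : ∀ c, Uᵀ * conjDiag Z c * U = (Zᵀ * U)ᵀ * diagonal c * (Zᵀ * U) := fun c => by
    simp only [conjDiag, transpose_mul, transpose_transpose, Matrix.mul_assoc]
  rw [← sub_nonneg, ← trace_sub, hconj, hconj, ← Matrix.sub_mul, ← Matrix.mul_sub,
    show diagonal b - diagonal a = diagonal (b - a) from diagonal_sub b a]
  refine Finset.sum_nonneg fun j _ => Finset.sum_nonneg fun i _ => ?_
  simp only [mul_diagonal, transpose_apply, Pi.sub_apply]
  rw [mul_right_comm]
  exact mul_nonneg (mul_self_nonneg _) (sub_nonneg.2 (hab i))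

theorem Matrix.IsHermitian.eq_conjDiag {A : Matrix N N ℝ} (hA : A.IsHermitian) :
    A = conjDiag hA.eigenvectorUnitary hA.eigenvalues := by
  have h := hA.spectral_theorem
  rwa [Unitary.conjStarAlgAut_apply, star_eq_conjTranspose,
    conjTranspose_eq_transpose_of_trivial] at h

theorem Matrix.IsHermitian.eigenvectorUnitary_transpose_mul {A : Matrix N N ℝ}
    (hA : A.IsHermitian) :
    (hA.eigenvectorUnitary : Matrix N N ℝ)ᵀ * hA.eigenvectorUnitary = 1 := by
  have h := Unitary.coe_star_mul_self hA.eigenvectorUnitary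
  rwa [star_eq_conjTranspose, conjTranspose_eq_transpose_of_trivial] at h

theorem Matrix.IsHermitian.mul_eigenvectorUnitary_transpose {A : Matrix N N ℝ}
    (hA : A.IsHermitian) :
    (hA.eigenvectorUnitary : Matrix N N ℝ) * (hA.eigenvectorUnitary : Matrix N N ℝ)ᵀ = 1 :=
  mul_eq_one_comm.mp hA.eigenvectorUnitary_transpose_mul

theorem Matrix.PosSemidef.exists_inv_sqrt_one_sub {G : Matrix N N ℝ} (hG : G.PosSemidef)
    (htr : trace G < 1) :
    ∃ T : Matrix N N ℝ, Tᵀ = T ∧ T * (1 - G) * T = 1 ∧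
      (Fintype.card N : ℝ) - trace G ≤ trace ((1 - G) * T) := by
  set W : Matrix N N ℝ := ↑hG.1.eigenvectorUnitary
  set e := hG.1.eigenvalues
  have hW := hG.1.eigenvectorUnitary_transpose_mul
  have he0 : ∀ i, 0 ≤ e i := hG.eigenvalues_nonneg
  have hsum : ∑ i, e i = trace G := by rw [hG.1.eq_conjDiag, trace_conjDiag hW]
  have he1 : ∀ i, 0 < 1 - e i := fun i => by
    linarith [Finset.single_le_sum (fun j _ => he0 j) (Finset.mem_univ i)]
  have hone_sub : 1 - G = conjDiag W (1 - e) := by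
    rw [conjDiag_sub, conjDiag_one hG.1.mul_eigenvectorUnitary_transpose, ← hG.1.eq_conjDiag]
  refine ⟨conjDiag W fun i => (√(1 - e i))⁻¹, transpose_conjDiag _ _, ?_, ?_⟩
  · rw [hone_sub, conjDiag_mul_conjDiag hW, conjDiag_mul_conjDiag hW,
      ← conjDiag_one hG.1.mul_eigenvectorUnitary_transpose]
    congr 1
    funext i
    simp only [Pi.mul_apply, Pi.sub_apply, Pi.one_apply]
    field_simp [(Real.sqrt_pos.2 (he1 i)).ne']
    exact (Real.sq_sqrt (he1 i).le).symm
  · rw [hone_sub, conjDiag_mul_conjDiag hW, trace_conjDiag hW, ← hsum]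
    calc (Fintype.card N : ℝ) - ∑ i, e i = ∑ i, (1 - e i) := by
          simp [Finset.sum_sub_distrib]
      _ ≤ _ := Finset.sum_le_sum fun i _ => ?_
    simp only [Pi.mul_apply, Pi.sub_apply, Pi.one_apply, ← div_eq_mul_inv, Real.div_sqrt]
    exact Real.le_sqrt_self_iff.2 (by linarith [he0 i])

end conjDiag

section frobNormSq

variable {m k n : ℕ}

theorem frobNormSq_nonneg (A : Matrix (Fin m) (Fin k) ℝ) : 0 ≤ frobNormSq A := by
  have h := (posSemidef_conjTranspose_mul_self A).trace_nonneg
  rwa [conjTranspose_eq_transpose_of_trivial] at h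

theorem frobNormSq_zero : frobNormSq (0 : Matrix (Fin m) (Fin k) ℝ) = 0 := by
  simp [frobNormSq]

theorem le_frobNorm_iff {x : ℝ} (hx : 0 ≤ x) (A : Matrix (Fin m) (Fin k) ℝ) :
    x ≤ frobNorm A ↔ x ^ 2 ≤ frobNormSq A :=
  Real.le_sqrt hx (frobNormSq_nonneg A)

theorem frobNormSq_mul (A : Matrix (Fin m) (Fin k) ℝ) (U : Matrix (Fin k) (Fin n) ℝ) :
    frobNormSq (A * U) = trace (Uᵀ * (Aᵀ * A) * U) := by
  simp only [frobNormSq, transpose_mul, Matrix.mul_assoc]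

theorem frobNormSq_sub_of_orthonormal {U V : Matrix (Fin k) (Fin n) ℝ} (hV : Vᵀ * V = 1)
    (hU : Uᵀ * U = 1) : frobNormSq (V - U) = 2 * n - 2 * trace (Uᵀ * V) := by
  have hVU : trace (Vᵀ * U) = trace (Uᵀ * V) := by
    rw [← trace_transpose, transpose_mul, transpose_transpose]
  simp only [frobNormSq, transpose_sub, Matrix.sub_mul, Matrix.mul_sub, trace_sub, hV, hU, hVU,
    trace_one, Fintype.card_fin]
  ring

theorem mem_argminSet_of_mul_eq_zero {A : Matrix (Fin m) (Fin k) ℝ}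
    {V : Matrix (Fin k) (Fin n) ℝ} (hV : Vᵀ * V = 1) (hAV : A * V = 0) : V ∈ argminSet n A :=
  ⟨hV, fun V' _ => by rw [hAV, frobNormSq_zero]; exact frobNormSq_nonneg _⟩

theorem exists_orthonormal_mul_eq_self_frobNormSq_sub_le {P : Matrix (Fin k) (Fin k) ℝ}
    (hPt : Pᵀ = P) (hPP : P * P = P) {U : Matrix (Fin k) (Fin n) ℝ} (hU : Uᵀ * U = 1)
    (hd : frobNormSq ((1 - P) * U) < 1) :
    ∃ V : Matrix (Fin k) (Fin n) ℝ, Vᵀ * V = 1 ∧ P * V = V ∧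
      frobNormSq (V - U) ≤ 2 * frobNormSq ((1 - P) * U) := by
  set G := Uᵀ * (1 - P) * U with hG_def
  have hQ : (1 - P)ᵀ * (1 - P) = 1 - P := by
    rw [transpose_sub, transpose_one, hPt, Matrix.mul_sub, Matrix.sub_mul, Matrix.sub_mul, hPP]
    simp
  have hG : G = ((1 - P) * U)ᵀ * ((1 - P) * U) := by
    simp only [G, transpose_mul, Matrix.mul_assoc, ← Matrix.mul_assoc (1 - P)ᵀ, hQ]
  have htrG : trace G = frobNormSq ((1 - P) * U) := by rw [hG]; rfl
  have hGpsd : G.PosSemidef := by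
    have h := posSemidef_conjTranspose_mul_self ((1 - P) * U)
    rwa [conjTranspose_eq_transpose_of_trivial, ← hG] at h
  obtain ⟨T, hTt, hT, htrT⟩ := hGpsd.exists_inv_sqrt_one_sub (htrG ▸ hd)
  have hUPU : Uᵀ * (P * U) = 1 - G := by
    rw [hG_def, Matrix.mul_sub, Matrix.sub_mul, Matrix.mul_one, hU, Matrix.mul_assoc,
      sub_sub_cancel]
  have hV : (P * U * T)ᵀ * (P * U * T) = 1 :=
    calc (P * U * T)ᵀ * (P * U * T) = Tᵀ * (Uᵀ * ((Pᵀ * P) * U)) * T := by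
          simp only [transpose_mul, Matrix.mul_assoc]
      _ = 1 := by rw [hPt, hPP, hUPU, hTt, hT]
  refine ⟨P * U * T, hV, by simp only [← Matrix.mul_assoc, hPP], ?_⟩
  have htrUV : trace (Uᵀ * (P * U * T)) = trace ((1 - G) * T) := by
    simp only [← hUPU, Matrix.mul_assoc]
  rw [frobNormSq_sub_of_orthonormal hV hU, htrUV]
  simp only [Fintype.card_fin] at htrT
  linarith

end frobNormSq

section kerProj

variable {m k n : ℕ} (A : Matrix (Fin m) (Fin k) ℝ)

theorem svMinPos_nonneg : 0 ≤ svMinPos A :=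
  Real.sInf_nonneg fun _ hx => hx.1.le

theorem sq_svMinPos_le_eigenvalue {j : Fin k}
    (hj : (transpose_mul_self_isHermitian A).eigenvalues j ≠ 0) :
    svMinPos A ^ 2 ≤ (transpose_mul_self_isHermitian A).eigenvalues j := by
  set μ := (transpose_mul_self_isHermitian A).eigenvalues
  have hμ : 0 < μ j := lt_of_le_of_ne
    (by simpa [conjTranspose_eq_transpose_of_trivial] using
      (posSemidef_conjTranspose_mul_self A).eigenvalues_nonneg j) hj.symm
  have hsv : sv A ((Tuple.sort μ)⁻¹ j).rev = √(μ j) := by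
    show √(μ (Tuple.sort μ ((Tuple.sort μ)⁻¹ j).rev.rev)) = √(μ j)
    rw [Fin.rev_rev, ← Equiv.Perm.mul_apply, mul_inv_cancel, Equiv.Perm.one_apply]
  have hle : svMinPos A ≤ √(μ j) :=
    csInf_le ⟨0, fun _ hx => hx.1.le⟩ ⟨Real.sqrt_pos.2 hμ, _, hsv⟩
  calc svMinPos A ^ 2 ≤ √(μ j) ^ 2 := pow_le_pow_left₀ (svMinPos_nonneg A) hle 2
    _ = μ j := Real.sq_sqrt hμ.le

/-- Projects onto the null eigenspace of `AᵀA`, which is `ker A`. -/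
noncomputable def kerProj : Matrix (Fin k) (Fin k) ℝ :=
  conjDiag (transpose_mul_self_isHermitian A).eigenvectorUnitary
    fun j => if (transpose_mul_self_isHermitian A).eigenvalues j = 0 then 1 else 0

theorem kerProj_transpose : (kerProj A)ᵀ = kerProj A :=
  transpose_conjDiag _ _

theorem kerProj_mul_self : kerProj A * kerProj A = kerProj A := by
  rw [kerProj,
    conjDiag_mul_conjDiag (transpose_mul_self_isHermitian A).eigenvectorUnitary_transpose_mul]
  congr 1
  funext j
  by_cases h : (transpose_mul_self_isHermitian A).eigenvalues j = 0 <;> simp [h]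

theorem mul_kerProj : A * kerProj A = 0 := by
  set hH := transpose_mul_self_isHermitian A
  have hZ := hH.eigenvectorUnitary_transpose_mul
  rw [← conjTranspose_mul_self_eq_zero, conjTranspose_eq_transpose_of_trivial, transpose_mul,
    Matrix.mul_assoc, ← Matrix.mul_assoc Aᵀ, hH.eq_conjDiag, kerProj_transpose, kerProj,
    conjDiag_mul_conjDiag hZ, conjDiag_mul_conjDiag hZ]
  convert conjDiag_zero (hH.eigenvectorUnitary : Matrix (Fin k) (Fin k) ℝ) using 2
  funext j
  by_cases h : hH.eigenvalues j = 0 <;> simp [h]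

theorem sq_svMinPos_mul_frobNormSq_le (U : Matrix (Fin k) (Fin n) ℝ) :
    svMinPos A ^ 2 * frobNormSq ((1 - kerProj A) * U) ≤ frobNormSq (A * U) := by
  set hH := transpose_mul_self_isHermitian A
  set Z : Matrix (Fin k) (Fin k) ℝ := ↑hH.eigenvectorUnitary
  have hZ := hH.eigenvectorUnitary_transpose_mul
  set q : Fin k → ℝ := fun j => if hH.eigenvalues j = 0 then 0 else 1
  have hQ : (1 - kerProj A)ᵀ * (1 - kerProj A) = conjDiag Z q := by
    rw [kerProj, ← conjDiag_one hH.mul_eigenvectorUnitary_transpose, ← conjDiag_sub,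
      transpose_conjDiag, conjDiag_mul_conjDiag hZ]
    congr 1
    funext j
    by_cases h : hH.eigenvalues j = 0 <;> simp [q, h]
  have hq : svMinPos A ^ 2 • q ≤ hH.eigenvalues := fun j => by
    by_cases h : hH.eigenvalues j = 0
    · simp [q, h]
    · simpa [q, h] using sq_svMinPos_le_eigenvalue A h
  calc svMinPos A ^ 2 * frobNormSq ((1 - kerProj A) * U)
      = trace (Uᵀ * conjDiag Z (svMinPos A ^ 2 • q) * U) := by
        rw [frobNormSq_mul, hQ, conjDiag_smul, Matrix.mul_smul, Matrix.smul_mul, trace_smul,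
          smul_eq_mul]
    _ ≤ trace (Uᵀ * conjDiag Z hH.eigenvalues * U) := trace_mul_conjDiag_mul_mono Z hq U
    _ = frobNormSq (A * U) := by rw [frobNormSq_mul, ← hH.eq_conjDiag]

end kerProj

theorem frobNorm_lower_bound_away_from_argmin_general {m k : ℕ} (r : ℕ)
    (A : Matrix (Fin m) (Fin k) ℝ) :
    ∃ ε₀ > (0 : ℝ), ∀ ε : ℝ, 0 < ε → ε ≤ ε₀ →
      ∀ U : Matrix (Fin k) (Fin (k - r)) ℝ, Uᵀ * U = 1 →
        (∀ U' ∈ argminSet (k - r) A, ε ≤ frobNorm (U' - U)) →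
        Real.sqrt 2 / 2 * svMinPos A * ε ≤ frobNorm (A * U) := by
  refine ⟨√2, by positivity, fun ε hε hε₀ U hU hfar => ?_⟩
  set d := frobNormSq ((1 - kerProj A) * U)
  have hεd : ε ^ 2 ≤ 2 * d := by
    rcases le_or_gt 1 d with hd | hd
    · calc ε ^ 2 ≤ √2 ^ 2 := pow_le_pow_left₀ hε.le hε₀ 2
        _ = 2 := Real.sq_sqrt zero_le_two
        _ ≤ 2 * d := by linarith
    · obtain ⟨V, hV, hPV, hVU⟩ := exists_orthonormal_mul_eq_self_frobNormSq_sub_le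
        (kerProj_transpose A) (kerProj_mul_self A) hU hd
      have hAV : A * V = 0 := by rw [← hPV, ← Matrix.mul_assoc, mul_kerProj, Matrix.zero_mul]
      have hεV := (le_frobNorm_iff hε.le _).1 (hfar V (mem_argminSet_of_mul_eq_zero hV hAV))
      linarith
  rw [le_frobNorm_iff (by have := svMinPos_nonneg A; positivity)]
  calc (√2 / 2 * svMinPos A * ε) ^ 2 = svMinPos A ^ 2 * (ε ^ 2 / 2) := by
        rw [mul_pow, mul_pow, div_pow, Real.sq_sqrt zero_le_two]; ring
    _ ≤ svMinPos A ^ 2 * d := by gcongr; linarith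
    _ ≤ frobNormSq (A * U) := sq_svMinPos_mul_frobNormSq_le A U

/-- away (by at least `ε`) from the argmin set `Ψ(A)`, `‖A U‖` is bounded
below by `(√2/2)·σ⁺_min(A)·ε`, for all sufficiently small `ε > 0`. -/
theorem frobNorm_lower_bound_away_from_argmin {m k : ℕ} (hk : k ≤ m) (r : ℕ) (hr : r < k)
    (A : Matrix (Fin m) (Fin k) ℝ) (hA : A ≠ 0) (hrank : A.rank ≤ r) :
    ∃ ε₀ > (0 : ℝ), ∀ ε : ℝ, 0 < ε → ε ≤ ε₀ →
      ∀ U : Matrix (Fin k) (Fin (k - r)) ℝ, Uᵀ * U = 1 →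
        (∀ U' ∈ argminSet (k - r) A, ε ≤ frobNorm (U' - U)) →
        Real.sqrt 2 / 2 * svMinPos A * ε ≤ frobNorm (A * U) :=
  frobNorm_lower_bound_away_from_argmin_general r A
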